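/- Assume the sequence {η^k} generated by Algorithm 1 converges to some point η̄ ∈ ℝⁿ. Then the sequences {w^k} and {x^k} generated by Algorithm 1 converge to a common limit w*, and w* satisfies 0 ∈ ∂(g* ∘ (−I))(w*) + ∂f*(w*); in particular, w* maximizes the dual objective −g*(−w) − f*(w) over w ∈ ℝⁿ. -/

import Mathlib

noncomputable section

open Matrix Filter
open scoped Pointwise

/-- `ℝⁿ` with the Euclidean inner product and norm. -/
abbrev Vec (n : ℕ) := EuclideanSpace ℝ (Fin n)

/-- Matrix–vector multiplication viewed as a map between Euclidean spaces. -/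
def mulVecE {m n : ℕ} (A : Matrix (Fin m) (Fin n) ℝ) (x : Vec n) : Vec m :=
  (EuclideanSpace.equiv (Fin m) ℝ).symm (A.mulVec (EuclideanSpace.equiv (Fin n) ℝ x))

/-- Subdifferential of an `ℝ ∪ {+∞}`-valued (coded as `EReal`-valued) function:
`∂h(x) = {u : ∀ z, h z ≥ h x + ⟨u, z − x⟩}`. -/
def subdiffE {n : ℕ} (f : Vec n → EReal) (x : Vec n) : Set (Vec n) :=
  {u | ∀ z, f x + ((inner ℝ u (z - x) : ℝ) : EReal) ≤ f z}

/-- Fenchel conjugate `h*(w) = sup_z (⟨w, z⟩ − h z)`. -/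
def fenchelE {n : ℕ} (f : Vec n → EReal) (w : Vec n) : EReal :=
  ⨆ z, ((inner ℝ w z : ℝ) : EReal) - f z

/-- Proper: never `−∞` (it takes values in `ℝ ∪ {+∞}`) and not identically `+∞`. -/
def ProperE {n : ℕ} (f : Vec n → EReal) : Prop :=
  (∀ x, f x ≠ ⊥) ∧ ∃ x, f x ≠ ⊤

/-- Convexity for `EReal`-valued functions. -/
def ConvexE {n : ℕ} (f : Vec n → EReal) : Prop :=
  ∀ x y : Vec n, ∀ a b : ℝ, 0 ≤ a → 0 ≤ b → a + b = 1 →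
    f (a • x + b • y) ≤ (a : EReal) * f x + (b : EReal) * f y

/-- `p` is a proximal point of `h` with parameter `s` at `x`, i.e. a minimizer of
`z ↦ h z + (1/(2 s)) ‖z − x‖²`; for proper convex lsc `h` it is the unique such point,
so this characterizes `p = Prox_{s h}(x)`. -/
def IsProxPt {n : ℕ} (h : Vec n → EReal) (s : ℝ) (p x : Vec n) : Prop :=
  ∀ z, h p + ((1 / (2 * s) * ‖p - x‖ ^ 2 : ℝ) : EReal)
      ≤ h z + ((1 / (2 * s) * ‖z - x‖ ^ 2 : ℝ) : EReal)

/-!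
The `q`-update is continuous in `η`, so `q^{k+1} → q̄ := (AᵀA + σI)⁻¹(Aᵀy + η̄)`; since
`η^{k+1} − η^k = 2σ(p^{k+1} − q^{k+1}) → 0`, also `p^{k+1} → q̄`, and then
`w^k, x^k → w* := η̄ − σq̄`.
Lower semicontinuity of `g` lets the prox inequality pass to the limit, so `q̄` is the proximal
point of `g` at `2q̄ − σ⁻¹η̄`, whose optimality condition reads `−w* ∈ ∂g(q̄)`; the normal
equations of the `q`-step say `w* = ∇f(q̄)`. Thus `(q̄, w*)` is a primal–dual pair: by the
Fenchel–Young equality `−q̄ ∈ ∂(g* ∘ (−I))(w*)` and `q̄ ∈ ∂f*(w*)`, while the Fenchel–Young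
inequality bounds the dual objective everywhere by `g(q̄) + f(q̄)`, its value at `w*`.
-/

open Topology

section MatrixVector

variable {k m n : ℕ}

theorem mulVecE_eq_toEuclideanLin (A : Matrix (Fin m) (Fin n) ℝ) :
    mulVecE A = Matrix.toEuclideanLin A := rfl

theorem mulVecE_apply (A : Matrix (Fin m) (Fin n) ℝ) (v : Vec n) :
    mulVecE A v = WithLp.toLp 2 (A *ᵥ v.ofLp) := rfl

theorem continuous_mulVecE (A : Matrix (Fin m) (Fin n) ℝ) : Continuous (mulVecE A) :=
  (Matrix.toEuclideanLin A).continuous_of_finiteDimensional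

theorem mulVecE_sub (A : Matrix (Fin m) (Fin n) ℝ) (u v : Vec n) :
    mulVecE A (u - v) = mulVecE A u - mulVecE A v :=
  map_sub (Matrix.toEuclideanLin A) u v

theorem mulVecE_mul (A : Matrix (Fin k) (Fin m) ℝ) (B : Matrix (Fin m) (Fin n) ℝ) (u : Vec n) :
    mulVecE (A * B) u = mulVecE A (mulVecE B u) := by
  simp only [mulVecE_apply, Matrix.mulVec_mulVec]

theorem inner_mulVecE_transpose (A : Matrix (Fin m) (Fin n) ℝ) (u : Vec m) (v : Vec n) :
    inner ℝ (mulVecE Aᵀ u) v = inner ℝ u (mulVecE A v) := by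
  rw [← Matrix.conjTranspose_eq_transpose_of_trivial, mulVecE_eq_toEuclideanLin,
    mulVecE_eq_toEuclideanLin, Matrix.toEuclideanLin_conjTranspose_eq_adjoint,
    LinearMap.adjoint_inner_left]

theorem isUnit_transpose_mul_self_add_smul_one (A : Matrix (Fin m) (Fin n) ℝ) {σ : ℝ}
    (hσ : 0 < σ) : IsUnit (Aᵀ * A + σ • 1) := by
  refine Matrix.PosDef.isUnit (Matrix.PosDef.posSemidef_add ?_ (Matrix.PosDef.one.smul hσ))
  simpa using Matrix.posSemidef_conjTranspose_mul_self A

theorem mulVecE_mulVecE_nonsing_inv {A : Matrix (Fin n) (Fin n) ℝ} (hA : IsUnit A) (v : Vec n) :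
    mulVecE A (mulVecE A⁻¹ v) = v := by
  rw [← mulVecE_mul, Matrix.mul_nonsing_inv _ (hA.map Matrix.detMonoidHom)]
  simp only [mulVecE_apply, Matrix.one_mulVec, WithLp.toLp_ofLp]

theorem transpose_mulVecE_residual_eq (A : Matrix (Fin m) (Fin n) ℝ) (y : Vec m) (σ : ℝ)
    {η q : Vec n} (hq : mulVecE (Aᵀ * A + σ • 1) q = mulVecE Aᵀ y + η) :
    mulVecE Aᵀ (mulVecE A q - y) = η - σ • q := by
  have hnormal : mulVecE Aᵀ (mulVecE A q) + σ • q = mulVecE Aᵀ y + η := by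
    rw [← hq, ← mulVecE_mul]
    simp only [mulVecE_apply, Matrix.add_mulVec, Matrix.smul_mulVec, Matrix.one_mulVec,
      WithLp.toLp_add, WithLp.toLp_smul, WithLp.toLp_ofLp]
  rw [mulVecE_sub]
  linear_combination (norm := module) hnormal

theorem leastSquares_mem_subdiffE (A : Matrix (Fin m) (Fin n) ℝ) (y : Vec m) (q : Vec n) :
    mulVecE Aᵀ (mulVecE A q - y) ∈
      subdiffE (fun v => ((1 / 2 * ‖y - mulVecE A v‖ ^ 2 : ℝ) : EReal)) q := by
  intro z
  rw [← EReal.coe_add, EReal.coe_le_coe_iff, inner_mulVecE_transpose, mulVecE_sub]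
  have hsplit : y - mulVecE A z = (y - mulVecE A q) - (mulVecE A z - mulVecE A q) := by abel
  rw [hsplit, norm_sub_sq_real (y - mulVecE A q), ← neg_sub y, inner_neg_left]
  linarith [sq_nonneg ‖mulVecE A z - mulVecE A q‖]

end MatrixVector

theorem le_of_forall_le_add_mul {a b C : ℝ} (h : ∀ t : ℝ, 0 < t → t ≤ 1 → a ≤ b + t * C) :
    a ≤ b := by
  have hcont : Continuous fun t : ℝ => b + t * C := by fun_prop
  have hlim : Tendsto (fun t => b + t * C) (𝓝[>] 0) (𝓝 b) :=
    (hcont.tendsto' 0 b (by simp)).mono_left nhdsWithin_le_nhds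
  refine ge_of_tendsto hlim ?_
  filter_upwards [Ioc_mem_nhdsGT one_pos] with t ht using h t ht.1 ht.2

theorem LowerSemicontinuous.le_of_tendsto {α ι : Type*} [TopologicalSpace α] {h : α → EReal}
    (hh : LowerSemicontinuous h) {l : Filter ι} [l.NeBot] {p : ι → α} {r : ι → EReal} {p₀ : α}
    {r₀ : EReal} (hp : Tendsto p l (𝓝 p₀)) (hr : Tendsto r l (𝓝 r₀))
    (hle : ∀ᶠ k in l, h (p k) ≤ r k) : h p₀ ≤ r₀ :=
  hh.isClosed_epigraph.mem_of_tendsto (hp.prodMk_nhds hr) hle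

theorem EReal.exists_eq_coe {a : EReal} (ha : a ≠ ⊤) (ha' : a ≠ ⊥) : ∃ r : ℝ, a = r :=
  ⟨a.toReal, (EReal.coe_toReal ha ha').symm⟩

section ConvexAnalysis

variable {n : ℕ} {h : Vec n → EReal} {s : ℝ} {p x : Vec n}

theorem IsProxPt.ne_top (hh : ProperE h) (hp : IsProxPt h s p x) : h p ≠ ⊤ := by
  obtain ⟨z, hz⟩ := hh.2
  intro hp_top
  have := hp z
  rw [hp_top, EReal.top_add_coe, top_le_iff] at this
  exact EReal.add_ne_top hz (EReal.coe_ne_top _) this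

theorem IsProxPt.inv_smul_sub_mem_subdiffE (hh : ProperE h) (hconv : ConvexE h)
    (hp : IsProxPt h s p x) : s⁻¹ • (x - p) ∈ subdiffE h p := by
  obtain ⟨a, ha⟩ := EReal.exists_eq_coe (hp.ne_top hh) (hh.1 p)
  intro z
  by_cases hz : h z = ⊤
  · simp [hz]
  obtain ⟨b, hb⟩ := EReal.exists_eq_coe hz (hh.1 z)
  rw [ha, hb, ← EReal.coe_add, EReal.coe_le_coe_iff]
  -- Test the prox inequality against `(1 - t) • p + t • z`, divide by `t` and let `t → 0`.
  refine le_of_forall_le_add_mul (C := ‖z - p‖ ^ 2 / (2 * s)) fun t ht ht1 => ?_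
  have hseg : h ((1 - t) • p + t • z) ≤ ((((1 - t) * a + t * b : ℝ)) : EReal) := by
    have := hconv p z (1 - t) t (by linarith) ht.le (by ring)
    rwa [ha, hb] at this
  have hreal : a + 1 / (2 * s) * ‖p - x‖ ^ 2
      ≤ (1 - t) * a + t * b + 1 / (2 * s) * ‖(1 - t) • p + t • z - x‖ ^ 2 := by
    have := (hp ((1 - t) • p + t • z)).trans (add_le_add hseg le_rfl)
    rw [ha] at this
    exact_mod_cast this
  have hexp : ‖(1 - t) • p + t • z - x‖ ^ 2
      = ‖p - x‖ ^ 2 + 2 * t * inner ℝ (p - x) (z - p) + t ^ 2 * ‖z - p‖ ^ 2 := by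
    rw [show (1 - t) • p + t • z - x = (p - x) + t • (z - p) by module, norm_add_sq_real,
      real_inner_smul_right, norm_smul, mul_pow, Real.norm_eq_abs, sq_abs]
    ring
  have hscaled : t * (a + inner ℝ (s⁻¹ • (x - p)) (z - p))
      ≤ t * (b + t * (‖z - p‖ ^ 2 / (2 * s))) := by
    rw [real_inner_smul_left, ← neg_sub p x, inner_neg_left]
    rw [hexp] at hreal
    linear_combination hreal
  exact le_of_mul_le_mul_left hscaled ht

theorem IsProxPt.of_tendsto (hlsc : LowerSemicontinuous h) (hbot : ∀ z, h z ≠ ⊥)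
    {p' x' : ℕ → Vec n} (hp : Tendsto p' atTop (𝓝 p)) (hx : Tendsto x' atTop (𝓝 x))
    (hprox : ∀ k, IsProxPt h s (p' k) (x' k)) : IsProxPt h s p x := by
  intro z
  by_cases hz : h z = ⊤
  · rw [hz, EReal.top_add_coe]
    exact le_top
  obtain ⟨b, hb⟩ := EReal.exists_eq_coe hz (hbot z)
  set c := 1 / (2 * s)
  have hbound :
      ∀ k, h (p' k) ≤ ((b + c * ‖z - x' k‖ ^ 2 - c * ‖p' k - x' k‖ ^ 2 : ℝ) : EReal) := by
    intro k
    have := hprox k z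
    rw [hb, ← EReal.coe_add] at this
    rwa [EReal.coe_sub, EReal.le_sub_iff_add_le (.inl (EReal.coe_ne_bot _))
      (.inl (EReal.coe_ne_top _))]
  have hlim : h p ≤ ((b + c * ‖z - x‖ ^ 2 - c * ‖p - x‖ ^ 2 : ℝ) : EReal) := by
    refine hlsc.le_of_tendsto hp (continuous_coe_real_ereal.tendsto _ |>.comp ?_)
      (Eventually.of_forall hbound)
    exact (tendsto_const_nhds.add (((tendsto_const_nhds.sub hx).norm.pow 2).const_mul c)).sub
      (((hp.sub hx).norm.pow 2).const_mul c)
  rw [hb, ← EReal.coe_add]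
  rwa [EReal.coe_sub, EReal.le_sub_iff_add_le (.inl (EReal.coe_ne_bot _))
    (.inl (EReal.coe_ne_top _))] at hlim

end ConvexAnalysis

section FenchelDuality

variable {n : ℕ} {F G : Vec n → EReal} {u q : Vec n} {a b : ℝ}

theorem coe_inner_sub_le_fenchelE (F : Vec n → EReal) (u q : Vec n) :
    ((inner ℝ u q : ℝ) : EReal) - F q ≤ fenchelE F u :=
  le_iSup (fun z => ((inner ℝ u z : ℝ) : EReal) - F z) q

theorem fenchelE_eq_of_mem_subdiffE (hq : F q = a) (hu : u ∈ subdiffE F q) :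
    fenchelE F u = ((inner ℝ u q - a : ℝ) : EReal) := by
  refine le_antisymm (iSup_le fun z => ?_) ?_
  · have hz := hu z
    rw [hq, ← EReal.coe_add] at hz
    calc ((inner ℝ u z : ℝ) : EReal) - F z
        ≤ ((inner ℝ u z : ℝ) : EReal) - ((a + inner ℝ u (z - q) : ℝ) : EReal) :=
          EReal.sub_le_sub le_rfl hz
      _ = ((inner ℝ u q - a : ℝ) : EReal) := by
          rw [← EReal.coe_sub, inner_sub_right]
          ring_nf
  · rw [EReal.coe_sub, ← hq]
    exact coe_inner_sub_le_fenchelE F u q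

theorem mem_subdiffE_fenchelE_of_mem_subdiffE (hq : F q = a) (hu : u ∈ subdiffE F q) :
    q ∈ subdiffE (fenchelE F) u := by
  intro z
  rw [fenchelE_eq_of_mem_subdiffE hq hu]
  calc ((inner ℝ u q - a : ℝ) : EReal) + ((inner ℝ q (z - u) : ℝ) : EReal)
      = ((inner ℝ z q : ℝ) : EReal) - F q := by
        rw [hq, ← EReal.coe_add, ← EReal.coe_sub, inner_sub_right, real_inner_comm u q,
          real_inner_comm z q]
        ring_nf
    _ ≤ fenchelE F z := coe_inner_sub_le_fenchelE F z q

theorem neg_mem_subdiffE_comp_neg (hu : u ∈ subdiffE F q) :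
    -u ∈ subdiffE (fun v => F (-v)) (-q) := by
  intro z
  have hinner : inner ℝ (-u) (z - -q) = inner ℝ u (-z - q) := by
    rw [inner_neg_left, ← inner_neg_right]
    congr 1
    abel
  simpa only [neg_neg, hinner] using hu (-z)

theorem zero_mem_subdiffE_fenchelE_comp_neg_add (hG : G q = a) (hF : F q = b)
    (hGu : -u ∈ subdiffE G q) (hFu : u ∈ subdiffE F q) :
    (0 : Vec n) ∈ subdiffE (fun v => fenchelE G (-v)) u + subdiffE (fenchelE F) u := by
  refine ⟨-q, ?_, q, mem_subdiffE_fenchelE_of_mem_subdiffE hF hFu, neg_add_cancel q⟩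
  simpa only [neg_neg] using
    neg_mem_subdiffE_comp_neg (mem_subdiffE_fenchelE_of_mem_subdiffE hG hGu)

theorem neg_fenchelE_neg_sub_fenchelE_le (hG : G q = a) (hF : F q = b) (w : Vec n) :
    -fenchelE G (-w) - fenchelE F w ≤ ((a + b : ℝ) : EReal) := by
  have hGw := coe_inner_sub_le_fenchelE G (-w) q
  have hFw := coe_inner_sub_le_fenchelE F w q
  rw [hG, ← EReal.coe_sub] at hGw
  rw [hF, ← EReal.coe_sub] at hFw
  calc -fenchelE G (-w) - fenchelE F w
      ≤ -((inner ℝ (-w) q - a : ℝ) : EReal) - ((inner ℝ w q - b : ℝ) : EReal) :=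
        EReal.sub_le_sub (EReal.neg_le_neg_iff.mpr hGw) hFw
    _ = ((a + b : ℝ) : EReal) := by
        rw [← EReal.coe_neg, ← EReal.coe_sub, inner_neg_left]
        ring_nf

theorem neg_fenchelE_neg_sub_fenchelE_le_of_mem_subdiffE (hG : G q = a) (hF : F q = b)
    (hGu : -u ∈ subdiffE G q) (hFu : u ∈ subdiffE F q) (w : Vec n) :
    -fenchelE G (-w) - fenchelE F w ≤ -fenchelE G (-u) - fenchelE F u := by
  rw [fenchelE_eq_of_mem_subdiffE hG hGu, fenchelE_eq_of_mem_subdiffE hF hFu,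
    ← EReal.coe_neg, ← EReal.coe_sub, inner_neg_left]
  convert neg_fenchelE_neg_sub_fenchelE_le hG hF w using 2
  ring

end FenchelDuality

/-- If the sequence `{η^k}` generated by Algorithm 1 converges, then
`{w^k}` and `{x^k}` converge to a common limit `w*` satisfying
`0 ∈ ∂(g* ∘ (−I))(w*) + ∂f*(w*)`; in particular `w*` maximizes the dual objective
`w ↦ −g*(−w) − f*(w)`. -/
theorem stmt1 {m n : ℕ}
    (A : Matrix (Fin m) (Fin n) ℝ) (y : Vec m) (σ : ℝ) (hσ : 0 < σ)
    (g : Vec n → EReal) (hg_proper : ProperE g) (hg_convex : ConvexE g)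
    (hg_lsc : LowerSemicontinuous g)
    (f : Vec n → ℝ) (hf : ∀ v, f v = (1 / 2) * ‖y - mulVecE A v‖ ^ 2)
    (η q w p x : ℕ → Vec n)
    (hq : ∀ k, q (k + 1) = mulVecE (Aᵀ * A + σ • 1)⁻¹ (mulVecE Aᵀ y + η k))
    (hw : ∀ k, w (k + 1) = η k - σ • q (k + 1))
    (hp : ∀ k, IsProxPt g σ⁻¹ (p (k + 1)) (σ⁻¹ • ((2 * σ) • q (k + 1) - η k)))
    (hx : ∀ k, x (k + 1) = η k + σ • p (k + 1) - (2 * σ) • q (k + 1))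
    (hη : ∀ k, η (k + 1) = η k + (2 * σ) • (p (k + 1) - q (k + 1)))
    (ηbar : Vec n) (hconv : Tendsto η atTop (nhds ηbar)) :
    ∃ wstar : Vec n,
      Tendsto w atTop (nhds wstar) ∧
      Tendsto x atTop (nhds wstar) ∧
      (0 : Vec n) ∈ subdiffE (fun v => fenchelE g (-v)) wstar +
          subdiffE (fenchelE (fun v => ((f v : ℝ) : EReal))) wstar ∧
      ∀ w' : Vec n,
        -fenchelE g (-w') - fenchelE (fun v => ((f v : ℝ) : EReal)) w' ≤
          -fenchelE g (-wstar) - fenchelE (fun v => ((f v : ℝ) : EReal)) wstar := by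
  set qbar := mulVecE (Aᵀ * A + σ • 1)⁻¹ (mulVecE Aᵀ y + ηbar)
  set wstar := ηbar - σ • qbar
  have hq_lim : Tendsto (fun k => q (k + 1)) atTop (𝓝 qbar) := by
    refine (((continuous_mulVecE _).tendsto _).comp (tendsto_const_nhds.add hconv)).congr ?_
    exact fun k => (hq k).symm
  have hp_lim : Tendsto (fun k => p (k + 1)) atTop (𝓝 qbar) := by
    have hp_eq : ∀ k, p (k + 1) = q (k + 1) + (2 * σ)⁻¹ • (η (k + 1) - η k) := by
      intro k
      rw [hη k, add_sub_cancel_left, inv_smul_smul₀ (by positivity), add_sub_cancel]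
    have hstep := (tendsto_add_atTop_iff_nat 1).2 hconv |>.sub hconv |>.const_smul (2 * σ)⁻¹
    simpa only [hp_eq, sub_self, smul_zero, add_zero] using hq_lim.add hstep
  have hw_lim : Tendsto w atTop (𝓝 wstar) := by
    rw [← tendsto_add_atTop_iff_nat 1]
    simpa only [hw] using hconv.sub (hq_lim.const_smul σ)
  have hx_lim : Tendsto x atTop (𝓝 wstar) := by
    rw [← tendsto_add_atTop_iff_nat 1]
    have hlim := (hconv.add (hp_lim.const_smul σ)).sub (hq_lim.const_smul (2 * σ))
    rwa [show ηbar + σ • qbar - (2 * σ) • qbar = wstar by module, ← funext hx] at hlim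
  have hprox : IsProxPt g σ⁻¹ qbar (σ⁻¹ • ((2 * σ) • qbar - ηbar)) :=
    IsProxPt.of_tendsto hg_lsc hg_proper.1 hp_lim
      (((hq_lim.const_smul (2 * σ)).sub hconv).const_smul σ⁻¹) hp
  have hg_sub : -wstar ∈ subdiffE g qbar := by
    convert hprox.inv_smul_sub_mem_subdiffE hg_proper hg_convex using 1
    rw [inv_inv, smul_sub, smul_inv_smul₀ hσ.ne']
    module
  have hf_sub : wstar ∈ subdiffE (fun v => ((f v : ℝ) : EReal)) qbar := by
    have hnormal : mulVecE (Aᵀ * A + σ • 1) qbar = mulVecE Aᵀ y + ηbar :=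
      mulVecE_mulVecE_nonsing_inv (isUnit_transpose_mul_self_add_smul_one A hσ) _
    rw [show wstar = _ from (transpose_mulVecE_residual_eq A y σ hnormal).symm, funext hf]
    exact leastSquares_mem_subdiffE A y qbar
  obtain ⟨a, ha⟩ := EReal.exists_eq_coe (hprox.ne_top hg_proper) (hg_proper.1 qbar)
  exact ⟨wstar, hw_lim, hx_lim,
    zero_mem_subdiffE_fenchelE_comp_neg_add ha rfl hg_sub hf_sub,
    neg_fenchelE_neg_sub_fenchelE_le_of_mem_subdiffE ha rfl hg_sub hf_sub⟩
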